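/- arXiv:2012.08461 — 3 statements merged into one kernel-verified Lean document; each statement's English description precedes it below -/
import Mathlib

section
/- Let k be a field, A a finite-dimensional k-algebra, and 𝓜, 𝓝 two sets of finite-dimensional A-modules with 𝓝 hyperfinite. Suppose there exists a constant L ≥ 0 such that every M ∈ 𝓜 has an A-submodule P ⊆ M with dim_k M − dim_k P ≤ L and P isomorphic to a member of 𝓝. Then 𝓜 is hyperfinite. -/
/-!
Given `ε`, take the bound `L₁` that `𝓝` provides for `ε / 2`. A module `M` with
`dim M ≤ 2L/ε` is a single block of dimension at most `⌈2L/ε⌉`. Otherwise `M` contains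
`P ≅ N_j` with `dim M - dim P ≤ L < (ε/2) dim M`, and the decomposable submodule of `N_j`
of relative dimension `≥ 1 - ε/2`, transported into `P`, has dimension at least
`(1 - ε/2)(dim M - L) ≥ (1 - ε) dim M` in `M`.
-/

/-- A family `M i` of finite-dimensional modules over a finite-dimensional `k`-algebra `A`
is *hyperfinite* if for every `ε > 0` there is a bound `L` such that every member `M i`
contains an `A`-submodule `N` with `dim_k N ≥ (1 - ε) * dim_k (M i)` which decomposes as a
(finite, internal) direct sum of `A`-modules each of `k`-dimension at most `L`. -/
def IsHyperfiniteFamily (k A : Type) [Field k] [Ring A] [Algebra k A]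
    {ι : Type} (M : ι → Type)
    [∀ i, AddCommGroup (M i)] [∀ i, Module k (M i)] [∀ i, Module A (M i)]
    [∀ i, IsScalarTower k A (M i)] [∀ i, FiniteDimensional k (M i)] : Prop :=
  ∀ ε : ℝ, 0 < ε → ∃ L : ℕ, 0 < L ∧ ∀ i : ι,
    ∃ N : Submodule A (M i),
      (1 - ε) * (Module.finrank k (M i) : ℝ) ≤ (Module.finrank k N : ℝ) ∧
      ∃ (t : ℕ) (Z : Fin t → Submodule A N),
        DirectSum.IsInternal Z ∧ ∀ j, Module.finrank k (Z j) ≤ L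

open Module

theorem DirectSum.IsInternal.map_linearEquiv {R M M₂ ι : Type*} [Ring R] [DecidableEq ι]
    [AddCommGroup M] [Module R M] [AddCommGroup M₂] [Module R M₂] {Z : ι → Submodule R M}
    (hZ : IsInternal Z) (e : M ≃ₗ[R] M₂) : IsInternal fun i => (Z i).map (e : M →ₗ[R] M₂) := by
  rw [isInternal_submodule_iff_iSupIndep_and_iSup_eq_top] at hZ ⊢
  exact ⟨hZ.1.map_orderIso (Submodule.orderIsoMapComap e),
    by rw [← Submodule.map_iSup, hZ.2, Submodule.map_top, LinearEquiv.range]⟩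

theorem DirectSum.isInternal_const_top {R M ι : Type*} [Ring R] [DecidableEq ι] [Unique ι]
    [AddCommGroup M] [Module R M] : IsInternal fun _ : ι => (⊤ : Submodule R M) :=
  isInternal_submodule_of_iSupIndep_of_iSup_eq_top (iSupIndep_subsingleton _) iSup_const

section BlockDecomposition

variable (k A : Type*) [Field k] [Ring A] [Algebra k A]

def IsBlockDecomposable (V : Type*) [AddCommGroup V] [Module k V] [Module A V]
    [IsScalarTower k A V] (L : ℕ) : Prop :=
  ∃ (t : ℕ) (Z : Fin t → Submodule A V), DirectSum.IsInternal Z ∧ ∀ j, finrank k (Z j) ≤ L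

def IsAlmostBlockDecomposable (V : Type*) [AddCommGroup V] [Module k V] [Module A V]
    [IsScalarTower k A V] (ε : ℝ) (L : ℕ) : Prop :=
  ∃ N : Submodule A V, (1 - ε) * (finrank k V : ℝ) ≤ finrank k N ∧ IsBlockDecomposable k A N L

variable {k A} {V W : Type*}
  [AddCommGroup V] [Module k V] [Module A V] [IsScalarTower k A V]
  [AddCommGroup W] [Module k W] [Module A W] [IsScalarTower k A W]

theorem finrank_submodule_top : finrank k (⊤ : Submodule A V) = finrank k V :=
  (Submodule.topEquiv.restrictScalars k).finrank_eq

theorem IsBlockDecomposable.mono {L L' : ℕ} (h : IsBlockDecomposable k A V L) (hL : L ≤ L') :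
    IsBlockDecomposable k A V L' :=
  let ⟨t, Z, hZ, hZL⟩ := h
  ⟨t, Z, hZ, fun j => (hZL j).trans hL⟩

theorem IsBlockDecomposable.of_linearEquiv {L : ℕ} (h : IsBlockDecomposable k A V L)
    (e : V ≃ₗ[A] W) : IsBlockDecomposable k A W L := by
  obtain ⟨t, Z, hZ, hZL⟩ := h
  refine ⟨t, fun j => (Z j).map (e : V →ₗ[A] W), hZ.map_linearEquiv e, fun j => ?_⟩
  rw [← ((e.submoduleMap (Z j)).restrictScalars k).finrank_eq]
  exact hZL j

theorem isBlockDecomposable_finrank : IsBlockDecomposable k A V (finrank k V) :=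
  ⟨1, fun _ => ⊤, DirectSum.isInternal_const_top, fun _ => finrank_submodule_top.le⟩

theorem IsAlmostBlockDecomposable.mono {ε : ℝ} {L L' : ℕ}
    (h : IsAlmostBlockDecomposable k A V ε L) (hL : L ≤ L') :
    IsAlmostBlockDecomposable k A V ε L' :=
  let ⟨N, hN, hNL⟩ := h
  ⟨N, hN, hNL.mono hL⟩

theorem isAlmostBlockDecomposable_of_finrank_le {ε : ℝ} {L : ℕ} (hε : 0 ≤ ε)
    (hV : finrank k V ≤ L) : IsAlmostBlockDecomposable k A V ε L := by
  refine ⟨⊤, ?_, (isBlockDecomposable_finrank.of_linearEquiv Submodule.topEquiv.symm).mono hV⟩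
  rw [finrank_submodule_top]
  nlinarith [(finrank k V).cast_nonneg (α := ℝ)]

theorem IsAlmostBlockDecomposable.of_submodule_linearEquiv {ε : ℝ} {L c : ℕ}
    (h : IsAlmostBlockDecomposable k A W (ε / 2) L) (P : Submodule A V)
    (hP : finrank k V ≤ finrank k P + c) (e : P ≃ₗ[A] W)
    (hc : 2 * (c : ℝ) < ε * finrank k V) : IsAlmostBlockDecomposable k A V ε L := by
  obtain ⟨N, hN, hNL⟩ := h
  let f : W →ₗ[A] V := P.subtype ∘ₗ (e.symm : W →ₗ[A] P)
  have hf : Function.Injective f := P.injective_subtype.comp e.symm.injective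
  let g : N ≃ₗ[A] N.map f := Submodule.equivMapOfInjective f hf N
  refine ⟨N.map f, ?_, hNL.of_linearEquiv g⟩
  have hPW : finrank k P = finrank k W := (e.restrictScalars k).finrank_eq
  have hNN : finrank k N = finrank k (N.map f) := (g.restrictScalars k).finrank_eq
  have hP' : (finrank k V : ℝ) ≤ finrank k W + c := by exact_mod_cast hPW ▸ hP
  rw [← hNN]
  nlinarith [(finrank k N).cast_nonneg (α := ℝ), (finrank k W).cast_nonneg (α := ℝ),
    (c.cast_nonneg : (0 : ℝ) ≤ c)]

end BlockDecomposition

theorem isHyperfiniteFamily_iff {k A : Type} [Field k] [Ring A] [Algebra k A]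
    {ι : Type} (M : ι → Type)
    [∀ i, AddCommGroup (M i)] [∀ i, Module k (M i)] [∀ i, Module A (M i)]
    [∀ i, IsScalarTower k A (M i)] [∀ i, FiniteDimensional k (M i)] :
    IsHyperfiniteFamily k A M ↔
      ∀ ε : ℝ, 0 < ε → ∃ L : ℕ, 0 < L ∧ ∀ i, IsAlmostBlockDecomposable k A (M i) ε L :=
  Iff.rfl

theorem hyperfinite_of_submodules_of_bounded_codimension_general
    (k A : Type) [Field k] [Ring A] [Algebra k A]
    {ι κ : Type} (M : ι → Type) (N : κ → Type)
    [∀ i, AddCommGroup (M i)] [∀ i, Module k (M i)] [∀ i, Module A (M i)]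
    [∀ i, IsScalarTower k A (M i)] [∀ i, FiniteDimensional k (M i)]
    [∀ j, AddCommGroup (N j)] [∀ j, Module k (N j)] [∀ j, Module A (N j)]
    [∀ j, IsScalarTower k A (N j)] [∀ j, FiniteDimensional k (N j)]
    (hN : IsHyperfiniteFamily k A N)
    (L : ℕ)
    (hsub : ∀ i : ι, ∃ P : Submodule A (M i),
      Module.finrank k (M i) ≤ Module.finrank k P + L ∧
      ∃ j : κ, Nonempty (P ≃ₗ[A] N j)) :
    IsHyperfiniteFamily k A M := by
  rw [isHyperfiniteFamily_iff] at hN ⊢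
  intro ε hε
  obtain ⟨L₁, hL₁, hN⟩ := hN (ε / 2) (half_pos hε)
  refine ⟨max L₁ ⌈2 * L / ε⌉₊, lt_max_of_lt_left hL₁, fun i => ?_⟩
  by_cases hsmall : (finrank k (M i) : ℝ) ≤ 2 * L / ε
  · exact isAlmostBlockDecomposable_of_finrank_le hε.le
      (le_max_of_le_right (Nat.cast_le.mp (hsmall.trans (Nat.le_ceil _))))
  · obtain ⟨P, hP, j, ⟨e⟩⟩ := hsub i
    have hc : 2 * (L : ℝ) < ε * finrank k (M i) := by
      rw [not_le, div_lt_iff₀ hε] at hsmall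
      linarith
    exact ((hN j).of_submodule_linearEquiv P hP e hc).mono (le_max_left _ _)

/-- Proposition: hyperfiniteness extends from submodules of bounded codimension.
If every module of the family `M` has a submodule `P` of codimension at most `L`
isomorphic to a member of the hyperfinite family `N`, then `M` is hyperfinite. -/
theorem hyperfinite_of_submodules_of_bounded_codimension
    (k A : Type) [Field k] [Ring A] [Algebra k A] [FiniteDimensional k A]
    {ι κ : Type} (M : ι → Type) (N : κ → Type)
    [∀ i, AddCommGroup (M i)] [∀ i, Module k (M i)] [∀ i, Module A (M i)]
    [∀ i, IsScalarTower k A (M i)] [∀ i, FiniteDimensional k (M i)]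
    [∀ j, AddCommGroup (N j)] [∀ j, Module k (N j)] [∀ j, Module A (N j)]
    [∀ j, IsScalarTower k A (N j)] [∀ j, FiniteDimensional k (N j)]
    (hN : IsHyperfiniteFamily k A N)
    (L : ℕ)
    (hsub : ∀ i : ι, ∃ P : Submodule A (M i),
      Module.finrank k (M i) ≤ Module.finrank k P + L ∧
      ∃ j : κ, Nonempty (P ≃ₗ[A] N j)) :
    IsHyperfiniteFamily k A M :=
  hyperfinite_of_submodules_of_bounded_codimension_general k A M N hN L hsub
end

section
/- Let k be a field and A, B two finite-dimensional k-algebras. Let F be an additive, left-exact functor from the category of finite-dimensional A-modules to the category of finite-dimensional B-modules, and suppose there exist constants K₁, K₂ > 0 such that K₁·dim_k X ≤ dim_k F(X) ≤ K₂·dim_k X for all finite-dimensional A-modules X. If 𝓝 is a hyperfinite family of finite-dimensional A-modules, then the family {F(X) : X ∈ 𝓝} of finite-dimensional B-modules is also hyperfinite. -/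
/-!
Take `N ⊆ M` with `dim (M/N) ≤ δ dim M` splitting as `⨁ Nᵢ` with `dim Nᵢ ≤ L`. Left exactness
embeds `F(N)` into `F(M)` with cokernel inside `F(M/N)`, so `F(N)` has codimension at most
`K₂ δ dim M ≤ (K₂ δ / K₁) dim F(M)`, which is `ε dim F(M)` for `δ = ε K₁ / K₂`. An additive
functor preserves finite biproducts, so `F(N) = ⨁ F(Nᵢ)` with `dim F(Nᵢ) ≤ K₂ L`.
-/

open CategoryTheory

/-- The `k`-dimension of a module over the `k`-algebra `A`, computed after
restricting scalars along `k → A`. -/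
noncomputable def kdim (k A : Type) [Field k] [Ring A] [Algebra k A]
    (M : Type*) [AddCommGroup M] [Module A M] : ℕ :=
  Module.finrank k (RestrictScalars k A M)

/-- A set of (finite-dimensional) `A`-modules is *hyperfinite* if for every `ε > 0`
there is a bound `L` such that every member `M` contains an `A`-submodule `N` with
`dim_k N ≥ (1 - ε) * dim_k M` which decomposes as a (finite, internal) direct sum of
`A`-modules each of `k`-dimension at most `L`. -/
def IsHyperfinite (k A : Type) [Field k] [Ring A] [Algebra k A]
    (ℳ : Set (ModuleCat A)) : Prop :=
  ∀ ε : ℝ, 0 < ε → ∃ L : ℕ, 0 < L ∧ ∀ M ∈ ℳ,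
    ∃ N : Submodule A M,
      (1 - ε) * (kdim k A M : ℝ) ≤ (kdim k A N : ℝ) ∧
      ∃ (t : ℕ) (Z : Fin t → Submodule A N),
        DirectSum.IsInternal Z ∧ ∀ j, kdim k A (Z j) ≤ L

open LinearMap

section kdim

variable (k : Type) {A : Type} [Field k] [Ring A] [Algebra k A]
  {M N P : Type*} [AddCommGroup M] [Module A M] [AddCommGroup N] [Module A N]
  [AddCommGroup P] [Module A P]

/- Mathlib's `RestrictScalars.module` lives over the `AddCommMonoid` instance, while linear
algebra over a field looks for `Module k` over the `AddCommGroup` one; these instances bridge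
the gap. -/
instance RestrictScalars.addCommMonoidOfAddCommGroup (M : Type*) [AddCommGroup M] :
    AddCommMonoid (RestrictScalars k A M) :=
  AddCommGroup.toAddCommMonoid

instance RestrictScalars.moduleOfAddCommGroup (M : Type*) [AddCommGroup M] [Module A M] :
    @Module k (RestrictScalars k A M) _ AddCommGroup.toAddCommMonoid :=
  RestrictScalars.module k A M

def RestrictScalars.linearMap (f : M →ₗ[A] N) :
    RestrictScalars k A M →ₗ[k] RestrictScalars k A N where
  toFun := f
  map_add' := f.map_add
  map_smul' c := f.map_smul (algebraMap k A c)

theorem RestrictScalars.finiteDimensional_of_injective {f : M →ₗ[A] N}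
    (hf : Function.Injective f) [FiniteDimensional k (RestrictScalars k A N)] :
    FiniteDimensional k (RestrictScalars k A M) :=
  Module.Finite.of_injective (linearMap k f) hf

theorem RestrictScalars.finiteDimensional_of_surjective {f : M →ₗ[A] N}
    (hf : Function.Surjective f) [FiniteDimensional k (RestrictScalars k A M)] :
    FiniteDimensional k (RestrictScalars k A N) :=
  Module.Finite.of_surjective (linearMap k f) hf

theorem kdim_congr (e : M ≃ₗ[A] N) : kdim k A M = kdim k A N :=
  (LinearEquiv.ofBijective (RestrictScalars.linearMap k e.toLinearMap) e.bijective).finrank_eq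

theorem kdim_range_of_injective {f : M →ₗ[A] N} (hf : Function.Injective f) :
    kdim k A (range f) = kdim k A M :=
  (kdim_congr k (LinearEquiv.ofInjective f hf)).symm

theorem kdim_eq_add_finrank_range_of_exact {f : M →ₗ[A] N} {g : N →ₗ[A] P}
    (hf : Function.Injective f) (hfg : Function.Exact f g)
    [FiniteDimensional k (RestrictScalars k A N)] :
    kdim k A N = kdim k A M + Module.finrank k (range (RestrictScalars.linearMap k g)) := by
  have hfg' : Function.Exact (RestrictScalars.linearMap k f) (RestrictScalars.linearMap k g) :=
    hfg
  calc kdim k A N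
      = Module.finrank k (range (RestrictScalars.linearMap k g)) +
          Module.finrank k (ker (RestrictScalars.linearMap k g)) :=
        (finrank_range_add_finrank_ker _).symm
    _ = _ := by
      rw [hfg'.linearMap_ker_eq, finrank_range_of_inj (f := RestrictScalars.linearMap k f) hf,
        add_comm]
      rfl

theorem kdim_le_add_of_exact {f : M →ₗ[A] N} {g : N →ₗ[A] P} (hf : Function.Injective f)
    (hfg : Function.Exact f g) [FiniteDimensional k (RestrictScalars k A N)]
    [FiniteDimensional k (RestrictScalars k A P)] :
    kdim k A N ≤ kdim k A M + kdim k A P :=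
  (kdim_eq_add_finrank_range_of_exact k hf hfg).trans_le
    (Nat.add_le_add_left (Submodule.finrank_le _) _)

theorem kdim_submodule_add_kdim_quotient (p : Submodule A M)
    [FiniteDimensional k (RestrictScalars k A M)] :
    kdim k A p + kdim k A (M ⧸ p) = kdim k A M := by
  rw [kdim_eq_add_finrank_range_of_exact k p.injective_subtype (exact_subtype_mkQ p),
    range_eq_top_of_surjective (RestrictScalars.linearMap k p.mkQ) p.mkQ_surjective, finrank_top]
  rfl

end kdim

open Limits

section Bicone

variable {R : Type*} [Ring R] {J : Type*}

theorem ModuleCat.bicone_ι_π_apply {f : J → ModuleCat R} (b : Bicone f) (j : J) (x : f j) :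
    b.π j (b.ι j x) = x := by
  rw [← ModuleCat.comp_apply, bicone_ι_π_self, ModuleCat.id_apply]

theorem ModuleCat.injective_bicone_ι {f : J → ModuleCat R} (b : Bicone f) (j : J) :
    Function.Injective (b.ι j) :=
  Function.LeftInverse.injective (bicone_ι_π_apply b j)

theorem ModuleCat.isInternal_range_bicone_ι [Fintype J] [DecidableEq J] {f : J → ModuleCat R}
    {b : Bicone f} (hb : b.IsBilimit) : DirectSum.IsInternal fun j => range (b.ι j).hom := by
  have total (x : b.pt) : ∑ j, b.ι j (b.π j x) = x := by
    simpa using congr(Hom.hom $(IsBilimit.total hb) x)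
  rw [DirectSum.isInternal_submodule_iff_iSupIndep_and_iSup_eq_top]
  refine ⟨iSupIndep_def.2 fun j => Submodule.disjoint_def.2 ?_, ?_⟩
  · rintro _ ⟨y, rfl⟩ hy
    have hπ : ⨆ (j') (_ : j' ≠ j), range (b.ι j').hom ≤ ker (b.π j).hom :=
      iSup₂_le fun j' hj' => range_le_ker_iff.2 congr(Hom.hom $(bicone_ι_π_ne b hj'))
    have : y = 0 := by simpa [bicone_ι_π_apply] using hπ hy
    simp [this]
  · exact eq_top_iff.2 fun x _ => total x ▸ Submodule.sum_mem_iSup fun j => mem_range_self _ _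

end Bicone

namespace DirectSum.IsInternal

variable {R : Type*} [Ring R] {J : Type*} [DecidableEq J]
  {M : Type*} [AddCommGroup M] [Module R M] {Z : J → Submodule R M}

noncomputable def bicone (hZ : IsInternal Z) : Bicone fun j => ModuleCat.of R (Z j) :=
  letI := hZ.chooseDecomposition
  { pt := ModuleCat.of R M
    π j := ModuleCat.ofHom (component R J (fun j => Z j) j ∘ₗ decomposeLinearEquiv Z)
    ι j := ModuleCat.ofHom (Z j).subtype
    ι_π j j' := by
      ext x
      split_ifs with h
      · subst h
        simp
      · simp [component.of, h] }

noncomputable def isBilimitBicone [Fintype J] (hZ : IsInternal Z) : hZ.bicone.IsBilimit :=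
  letI := hZ.chooseDecomposition
  isBilimitOfTotal _ <| by
    ext x
    rw [ModuleCat.hom_sum, LinearMap.sum_apply]
    change ∑ j, ((decompose Z x j : Z j) : M) = x
    conv_rhs => rw [← (decompose Z).symm_apply_apply x, ← sum_univ_of (decompose Z x),
      decompose_symm_sum]
    simp only [decompose_symm_of]

theorem map_linearEquiv_s2 {N : Type*} [AddCommGroup N] [Module R N] (hZ : IsInternal Z)
    (e : M ≃ₗ[R] N) : IsInternal fun j => (Z j).map (e : M →ₗ[R] N) := by
  rw [isInternal_submodule_iff_iSupIndep_and_iSup_eq_top] at hZ ⊢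
  exact ⟨hZ.1.map_orderIso (Submodule.orderIsoMapComap e),
    by rw [← Submodule.map_iSup, hZ.2, Submodule.map_top, LinearEquiv.range]⟩

end DirectSum.IsInternal

universe v w

section ShortComplex

variable {A : Type*} [Ring A] {M : Type v} [AddCommGroup M] [Module A M]

abbrev Submodule.shortComplex (N : Submodule A M) : ShortComplex (ModuleCat.{v} A) :=
  ModuleCat.shortComplexOfCompEqZero N.subtype N.mkQ (exact_subtype_mkQ N).linearMap_comp_eq_zero

theorem Submodule.shortExact_shortComplex (N : Submodule A M) : N.shortComplex.ShortExact :=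
  ModuleCat.shortComplex_shortExact _ (exact_subtype_mkQ N) N.injective_subtype N.mkQ_surjective

end ShortComplex

section Functor

variable (k : Type) {A B : Type} [Field k] [Ring A] [Ring B] [Algebra k B]

theorem CategoryTheory.ShortComplex.Exact.kdim_X₂_le {S : ShortComplex (ModuleCat.{w} B)}
    (hS : S.Exact) (hf : Function.Injective S.f) [FiniteDimensional k (RestrictScalars k B S.X₂)]
    [FiniteDimensional k (RestrictScalars k B S.X₃)] :
    kdim k B S.X₂ ≤ kdim k B S.X₁ + kdim k B S.X₃ :=
  kdim_le_add_of_exact k hf <| (ShortExact.moduleCat_exact_iff_function_exact S).1 hS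

theorem CategoryTheory.Functor.exists_isInternal_range_map
    (F : ModuleCat.{v} A ⥤ ModuleCat.{w} B) [F.Additive] {X : Type v} [AddCommGroup X]
    [Module A X] {Y : ModuleCat.{v} A} {f : ModuleCat.of A X ⟶ Y}
    (hf : Function.Injective (F.map f)) {J : Type} [Fintype J] [DecidableEq J]
    {Z : J → Submodule A X} (hZ : DirectSum.IsInternal Z) :
    ∃ W : J → Submodule B (range (F.map f).hom), DirectSum.IsInternal W ∧
      ∀ j, kdim k B (W j) = kdim k B (F.obj (ModuleCat.of A (Z j))) := by
  let e : F.obj (ModuleCat.of A X) ≃ₗ[B] range (F.map f).hom := LinearEquiv.ofInjective _ hf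
  let b := F.mapBicone hZ.bicone
  have hb : b.IsBilimit := isBilimitOfPreserves F hZ.isBilimitBicone
  refine ⟨_, (ModuleCat.isInternal_range_bicone_ι hb).map_linearEquiv_s2 e, fun j => ?_⟩
  exact (kdim_congr k (Submodule.equivMapOfInjective _ e.injective (range (b.ι j).hom))).symm
    |>.trans (kdim_range_of_injective k (ModuleCat.injective_bicone_ι b j))

theorem one_sub_mul_kdim_obj_le_kdim_range [Algebra k A]
    (F : ModuleCat.{v} A ⥤ ModuleCat.{w} B) [F.PreservesZeroMorphisms]
    (hfd : ∀ X : ModuleCat.{v} A, FiniteDimensional k (RestrictScalars k A X) →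
      FiniteDimensional k (RestrictScalars k B (F.obj X)))
    {K₁ K₂ : ℝ} (hK₂ : 0 < K₂)
    (hbound : ∀ X : ModuleCat.{v} A, FiniteDimensional k (RestrictScalars k A X) →
      K₁ * (kdim k A X : ℝ) ≤ kdim k B (F.obj X) ∧ (kdim k B (F.obj X) : ℝ) ≤ K₂ * kdim k A X)
    {M : ModuleCat.{v} A} [FiniteDimensional k (RestrictScalars k A M)] {N : Submodule A M}
    (hexact : (N.shortComplex.map F).Exact) (hinj : Function.Injective (F.map N.shortComplex.f))
    {ε : ℝ} (hε : 0 ≤ ε) (hN : (1 - ε * K₁ / K₂) * (kdim k A M : ℝ) ≤ kdim k A N) :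
    (1 - ε) * (kdim k B (F.obj M) : ℝ) ≤ kdim k B (range (F.map N.shortComplex.f).hom) := by
  have hQfd : FiniteDimensional k (RestrictScalars k A (M ⧸ N)) :=
    RestrictScalars.finiteDimensional_of_surjective k N.mkQ_surjective
  have : FiniteDimensional k (RestrictScalars k B (N.shortComplex.map F).X₂) :=
    hfd _ inferInstance
  have : FiniteDimensional k (RestrictScalars k B (N.shortComplex.map F).X₃) :=
    hfd (ModuleCat.of A (M ⧸ N)) hQfd
  have hleft : (kdim k B (F.obj M) : ℝ) ≤
      kdim k B (F.obj (ModuleCat.of A N)) + kdim k B (F.obj (ModuleCat.of A (M ⧸ N))) := by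
    exact_mod_cast hexact.kdim_X₂_le k hinj
  have hcodim : (kdim k A (M ⧸ N) : ℝ) ≤ ε * K₁ / K₂ * kdim k A M := by
    have : (kdim k A N : ℝ) + kdim k A (M ⧸ N) = kdim k A M := by
      exact_mod_cast kdim_submodule_add_kdim_quotient k N
    linarith
  have hQ : (kdim k B (F.obj (ModuleCat.of A (M ⧸ N))) : ℝ) ≤ ε * kdim k B (F.obj M) :=
    calc _ ≤ K₂ * kdim k A (M ⧸ N) := (hbound (ModuleCat.of A (M ⧸ N)) hQfd).2
      _ ≤ K₂ * (ε * K₁ / K₂ * kdim k A M) := by gcongr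
      _ = ε * (K₁ * kdim k A M) := by field_simp
      _ ≤ ε * kdim k B (F.obj M) := by gcongr; exact (hbound M inferInstance).1
  rw [kdim_range_of_injective k hinj]
  linarith

end Functor

theorem isHyperfinite_image_of_leftExact_dim_bounded_general
    (k A B : Type) [Field k] [Ring A] [Algebra k A]
    [Ring B] [Algebra k B]
    (F : ModuleCat A ⥤ ModuleCat B) [F.Additive]
    (hleftExact : ∀ S : ShortComplex (ModuleCat A), S.ShortExact →
      Mono (F.map S.f) ∧ (S.map F).Exact)
    (hfd : ∀ X : ModuleCat A, @FiniteDimensional k (RestrictScalars k A X) _ _ (RestrictScalars.module k A X) →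
      @FiniteDimensional k (RestrictScalars k B (F.obj X)) _ _ (RestrictScalars.module k B (F.obj X)))
    (K₁ K₂ : ℝ) (hK₁ : 0 < K₁) (hK₂ : 0 < K₂)
    (hbound : ∀ X : ModuleCat A, @FiniteDimensional k (RestrictScalars k A X) _ _ (RestrictScalars.module k A X) →
      K₁ * (kdim k A X : ℝ) ≤ (kdim k B (F.obj X) : ℝ) ∧
      (kdim k B (F.obj X) : ℝ) ≤ K₂ * (kdim k A X : ℝ))
    (𝓝 : Set (ModuleCat A))
    (h𝓝fd : ∀ M ∈ 𝓝, @FiniteDimensional k (RestrictScalars k A M) _ _ (RestrictScalars.module k A M))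
    (h𝓝 : IsHyperfinite k A 𝓝) :
    IsHyperfinite k B (F.obj '' 𝓝) := by
  intro ε hε
  obtain ⟨L, -, hN⟩ := h𝓝 (ε * K₁ / K₂) (by positivity)
  refine ⟨max 1 ⌈K₂ * L⌉₊, by positivity, ?_⟩
  rintro _ ⟨M, hM, rfl⟩
  have : FiniteDimensional k (RestrictScalars k A M) := h𝓝fd M hM
  obtain ⟨N, hNM, t, Z, hZ, hZL⟩ := hN M hM
  obtain ⟨hmono, hexact⟩ := hleftExact _ N.shortExact_shortComplex
  have hinj : Function.Injective (F.map N.shortComplex.f) :=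
    (ModuleCat.mono_iff_injective _).1 hmono
  obtain ⟨W, hW, hWdim⟩ := F.exists_isInternal_range_map k hinj hZ
  refine ⟨_, one_sub_mul_kdim_obj_le_kdim_range k F hfd hK₂ hbound hexact hinj hε.le hNM,
    t, W, hW, fun j => ?_⟩
  have : FiniteDimensional k (RestrictScalars k A N) :=
    RestrictScalars.finiteDimensional_of_injective k N.injective_subtype
  have : FiniteDimensional k (RestrictScalars k A (Z j)) :=
    RestrictScalars.finiteDimensional_of_injective k (Z j).injective_subtype
  rw [hWdim j, ← Nat.cast_le (α := ℝ)]
  calc _ ≤ K₂ * kdim k A (Z j) := (hbound (ModuleCat.of A (Z j)) inferInstance).2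
    _ ≤ K₂ * L := by gcongr; exact_mod_cast hZL j
    _ ≤ ⌈K₂ * L⌉₊ := Nat.le_ceil _
    _ ≤ (max 1 ⌈K₂ * L⌉₊ : ℕ) := by exact_mod_cast le_max_right _ _

/-- Proposition: an additive, left-exact functor `F` between the module categories of two
finite-dimensional `k`-algebras which distorts `k`-dimensions by at most fixed positive
multiplicative constants `K₁, K₂` preserves hyperfiniteness: the image of a hyperfinite
family of finite-dimensional modules is hyperfinite.  (Left exactness is expressed by:
`F` sends every short exact sequence `0 → X → Y → Z → 0` to an exact sequence
`0 → F(X) → F(Y) → F(Z)`.) -/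
theorem isHyperfinite_image_of_leftExact_dim_bounded
    (k A B : Type) [Field k] [Ring A] [Algebra k A] [FiniteDimensional k A]
    [Ring B] [Algebra k B] [FiniteDimensional k B]
    (F : ModuleCat A ⥤ ModuleCat B) [F.Additive]
    (hleftExact : ∀ S : ShortComplex (ModuleCat A), S.ShortExact →
      Mono (F.map S.f) ∧ (S.map F).Exact)
    (hfd : ∀ X : ModuleCat A, @FiniteDimensional k (RestrictScalars k A X) _ _ (RestrictScalars.module k A X) →
      @FiniteDimensional k (RestrictScalars k B (F.obj X)) _ _ (RestrictScalars.module k B (F.obj X)))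
    (K₁ K₂ : ℝ) (hK₁ : 0 < K₁) (hK₂ : 0 < K₂)
    (hbound : ∀ X : ModuleCat A, @FiniteDimensional k (RestrictScalars k A X) _ _ (RestrictScalars.module k A X) →
      K₁ * (kdim k A X : ℝ) ≤ (kdim k B (F.obj X) : ℝ) ∧
      (kdim k B (F.obj X) : ℝ) ≤ K₂ * (kdim k A X : ℝ))
    (𝓝 : Set (ModuleCat A))
    (h𝓝fd : ∀ M ∈ 𝓝, @FiniteDimensional k (RestrictScalars k A M) _ _ (RestrictScalars.module k A M))
    (h𝓝 : IsHyperfinite k A 𝓝) :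
    IsHyperfinite k B (F.obj '' 𝓝) :=
  isHyperfinite_image_of_leftExact_dim_bounded_general k A B F hleftExact hfd K₁ K₂ hK₁ hK₂ hbound 𝓝
    h𝓝fd h𝓝
end

section
/- Let k be a field, A a finite-dimensional k-algebra, C an indecomposable finite-dimensional A-module, and h : B → C a minimal right almost split morphism of finite-dimensional A-modules. If E ≠ 0 is a direct summand of B, then the induced map g : E → C given by restricting h to E is an irreducible morphism. -/
/-- A linear map is a split epimorphism if it admits a right inverse. -/
def LinearMap.IsSplitEpi {A : Type} [Ring A] {M N : Type}
    [AddCommGroup M] [Module A M] [AddCommGroup N] [Module A N]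
    (f : M →ₗ[A] N) : Prop :=
  ∃ s : N →ₗ[A] M, f ∘ₗ s = LinearMap.id

/-- A linear map is a split monomorphism if it admits a left inverse. -/
def LinearMap.IsSplitMono {A : Type} [Ring A] {M N : Type}
    [AddCommGroup M] [Module A M] [AddCommGroup N] [Module A N]
    (f : M →ₗ[A] N) : Prop :=
  ∃ r : N →ₗ[A] M, r ∘ₗ f = LinearMap.id

/-- A module is indecomposable if it is nonzero and admits no decomposition as a direct
sum of two nonzero submodules. -/
def IsIndecomposable (A M : Type) [Ring A] [AddCommGroup M] [Module A M] : Prop :=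
  Nontrivial M ∧ ∀ p q : Submodule A M, IsCompl p q → p = ⊥ ∨ q = ⊥

/-- `h : B → C` is right almost split (within the category of finite-dimensional
`A`-modules): it is not a split epimorphism, and every morphism `f : X → C` from a
finite-dimensional module which is not a split epimorphism factors through `h`. -/
def IsRightAlmostSplit (k : Type) {A : Type} [Field k] [Ring A] [Algebra k A]
    {B C : Type} [AddCommGroup B] [Module A B] [AddCommGroup C] [Module A C]
    (h : B →ₗ[A] C) : Prop :=
  ¬ h.IsSplitEpi ∧
  ∀ (X : Type) [AddCommGroup X] [Module A X] [Module k X] [IsScalarTower k A X]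
    [FiniteDimensional k X] (f : X →ₗ[A] C),
      ¬ f.IsSplitEpi → ∃ η : X →ₗ[A] B, h ∘ₗ η = f

/-- `h` is right minimal: any endomorphism `u` with `h ∘ u = h` is an isomorphism. -/
def IsRightMinimal {A : Type} [Ring A] {B C : Type}
    [AddCommGroup B] [Module A B] [AddCommGroup C] [Module A C]
    (h : B →ₗ[A] C) : Prop :=
  ∀ u : B →ₗ[A] B, h ∘ₗ u = h → Function.Bijective u

/-- `g : E → C` is irreducible (within the category of finite-dimensional `A`-modules):
it is neither a split monomorphism nor a split epimorphism, and in any factorization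
`g = s ∘ t` through a finite-dimensional module, `s` is a split epimorphism or `t` is a
split monomorphism. -/
def IsIrreducibleHom (k : Type) {A : Type} [Field k] [Ring A] [Algebra k A]
    {E C : Type} [AddCommGroup E] [Module A E] [AddCommGroup C] [Module A C]
    (g : E →ₗ[A] C) : Prop :=
  ¬ g.IsSplitMono ∧ ¬ g.IsSplitEpi ∧
  ∀ (X : Type) [AddCommGroup X] [Module A X] [Module k X] [IsScalarTower k A X]
    [FiniteDimensional k X] (t : E →ₗ[A] X) (s : X →ₗ[A] C),
      s ∘ₗ t = g → s.IsSplitEpi ∨ t.IsSplitMono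

/-!
Write `ι : E → B` for the inclusion. If `h ∘ ι` were split epi, so would be `h`. If it were split
mono with left inverse `r`, the idempotent `h ∘ ι ∘ r` would split `C`; indecomposability and
`E ≠ 0` force it to be the identity, so again `h` would be split epi. Given `h ∘ ι = s ∘ t` with `s`
not split epi, `s = h ∘ η` for some `η`; the endomorphism of `B` equal to `η ∘ t` on `E` and to the
identity on `E'` is fixed by `h`, hence an automorphism by right minimality, and composing its
inverse with `η` and the projection onto `E` gives a left inverse of `t`.
-/

namespace LinearMap

variable {A : Type} [Ring A] {M N P : Type} [AddCommGroup M] [Module A M]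
  [AddCommGroup N] [Module A N] [AddCommGroup P] [Module A P]

theorem IsSplitEpi.of_comp {f : N →ₗ[A] P} {g : M →ₗ[A] N} (hfg : (f ∘ₗ g).IsSplitEpi) :
    f.IsSplitEpi :=
  let ⟨s, hs⟩ := hfg
  ⟨g ∘ₗ s, hs⟩

theorem IsSplitMono.isSplitEpi_of_isIndecomposable [Nontrivial M] {g : M →ₗ[A] N}
    (hg : g.IsSplitMono) (hN : IsIndecomposable A N) : g.IsSplitEpi := by
  obtain ⟨r, hr⟩ := hg
  have hidem : (g ∘ₗ r) ∘ₗ (g ∘ₗ r) = g ∘ₗ r := by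
    rw [comp_assoc, ← comp_assoc r, hr, id_comp]
  refine ⟨r, ?_⟩
  rcases hN.2 _ _ (IsIdempotentElem.isCompl hidem) with hrange | hker
  · have hzero : g ∘ₗ r = 0 := range_eq_bot.mp hrange
    have hid : (LinearMap.id : M →ₗ[A] M) = 0 :=
      calc LinearMap.id = r ∘ₗ g ∘ₗ r ∘ₗ g := by rw [hr, comp_id, hr]
        _ = r ∘ₗ (g ∘ₗ r) ∘ₗ g := rfl
        _ = 0 := by rw [hzero, zero_comp, comp_zero]
    obtain ⟨x, hx⟩ := exists_ne (0 : M)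
    exact absurd congr($hid x) hx
  · ext x
    exact ker_eq_bot.mp hker congr($hidem x)

end LinearMap

open LinearMap in
theorem IsRightMinimal.isSplitMono_of_comp_eq {A : Type} [Ring A] {B C X : Type}
    [AddCommGroup B] [Module A B] [AddCommGroup C] [Module A C] [AddCommGroup X] [Module A X]
    {h : B →ₗ[A] C} (hmin : IsRightMinimal h) {E E' : Submodule A B} (hcompl : IsCompl E E')
    {t : E →ₗ[A] X} {η : X →ₗ[A] B} (hη : h ∘ₗ η ∘ₗ t = h ∘ₗ E.subtype) : t.IsSplitMono := by
  set u := ofIsCompl hcompl (η ∘ₗ t) E'.subtype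
  have hu : h ∘ₗ u = h := by
    ext x
    obtain ⟨y, z, rfl, -⟩ := Submodule.existsUnique_add_of_isCompl hcompl x
    simp only [comp_apply, map_add, u, ofIsCompl_apply_left, ofIsCompl_apply_right]
    exact congrArg₂ (· + ·) congr($hη y) rfl
  have hu_left : u ∘ₗ E.subtype = η ∘ₗ t := ext fun x => ofIsCompl_apply_left hcompl x
  let e := LinearEquiv.ofBijective u (hmin u hu)
  refine ⟨E.projectionOnto E' hcompl ∘ₗ e.symm.toLinearMap ∘ₗ η, ext fun x => ?_⟩
  have hx : e x = η (t x) := congr($hu_left x)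
  change E.projectionOnto E' hcompl (e.symm (η (t x))) = x
  rw [← hx, e.symm_apply_apply, Submodule.projectionOnto_apply_left]

theorem isIrreducible_restrict_of_minimal_right_almost_split_general
    (k A : Type) [Field k] [Ring A] [Algebra k A]
    (B C : Type)
    [AddCommGroup B] [Module A B]
    [AddCommGroup C] [Module A C]
    (hC : IsIndecomposable A C)
    (h : B →ₗ[A] C)
    (hmin : IsRightMinimal h) (hras : IsRightAlmostSplit k h)
    (E E' : Submodule A B) (hcompl : IsCompl E E') (hE : E ≠ ⊥) :
    IsIrreducibleHom k (h ∘ₗ E.subtype) := by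
  have not_epi : ¬ (h ∘ₗ E.subtype).IsSplitEpi := fun hepi => hras.1 hepi.of_comp
  have : Nontrivial E := Submodule.nontrivial_iff_ne_bot.mpr hE
  refine ⟨fun hmono => not_epi (hmono.isSplitEpi_of_isIndecomposable hC), not_epi, ?_⟩
  intro X _ _ _ _ _ t s hst
  refine or_iff_not_imp_left.mpr fun hs => ?_
  obtain ⟨η, hη⟩ := hras.2 X s hs
  exact hmin.isSplitMono_of_comp_eq hcompl (η := η) (by rw [← hst, ← hη, LinearMap.comp_assoc])

/-- Theorem (Auslander–Reiten): if `h : B → C` is a minimal right almost split morphism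
of finite-dimensional modules with `C` indecomposable, then the restriction of `h` to any
nonzero direct summand `E` of `B` is irreducible. -/
theorem isIrreducible_restrict_of_minimal_right_almost_split
    (k A : Type) [Field k] [Ring A] [Algebra k A] [FiniteDimensional k A]
    (B C : Type)
    [AddCommGroup B] [Module A B] [Module k B] [IsScalarTower k A B] [FiniteDimensional k B]
    [AddCommGroup C] [Module A C] [Module k C] [IsScalarTower k A C] [FiniteDimensional k C]
    (hC : IsIndecomposable A C)
    (h : B →ₗ[A] C)
    (hmin : IsRightMinimal h) (hras : IsRightAlmostSplit k h)
    (E E' : Submodule A B) (hcompl : IsCompl E E') (hE : E ≠ ⊥) :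
    IsIrreducibleHom k (h ∘ₗ E.subtype) :=
  isIrreducible_restrict_of_minimal_right_almost_split_general k A B C hC h hmin hras E E' hcompl hE
end
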